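/- If S is an independent set in a connected graph G belonging to class W_2, then deg(v) ≤ |N(S)| − |S| + 1 for every vertex v ∈ S. -/

import Mathlib

open Finset

/-- A finset of vertices is independent: no two of its members are adjacent. -/
def IndepSet {V : Type*} (G : SimpleGraph V) (A : Finset V) : Prop :=
  ∀ u ∈ A, ∀ v ∈ A, ¬ G.Adj u v

open scoped Classical in
/-- Maximum size of an independent set contained in `s` (independence number of `G[s]`). -/
noncomputable def alphaOn {V : Type*} [Fintype V] (G : SimpleGraph V) (s : Finset V) : ℕ :=
  ((s.powerset).filter (fun A => IndepSet G A)).sup Finset.card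

/-- The independence number of `G`. -/
noncomputable def alpha {V : Type*} [Fintype V] (G : SimpleGraph V) : ℕ :=
  alphaOn G Finset.univ

/-- The induced subgraph `G[s]` is well-covered: every maximal independent subset of `s`
has maximum cardinality. -/
def WellCoveredOn {V : Type*} [Fintype V] (G : SimpleGraph V) (s : Finset V) : Prop :=
  ∀ A ⊆ s, IndepSet G A →
    (∀ B ⊆ s, IndepSet G B → A ⊆ B → A = B) → A.card = alphaOn G s

/-- `G` is well-covered. -/
def WellCovered {V : Type*} [Fintype V] (G : SimpleGraph V) : Prop :=
  WellCoveredOn G Finset.univ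

open scoped Classical in
/-- The open neighborhood `N(A)`: vertices having a neighbor in `A`. -/
noncomputable def nbhd {V : Type*} [Fintype V] (G : SimpleGraph V) (A : Finset V) : Finset V :=
  Finset.univ.filter (fun v => ∃ u ∈ A, G.Adj u v)

/-- The closed neighborhood `N[A] = A ∪ N(A)`. -/
noncomputable def closedNbhd {V : Type*} [Fintype V] [DecidableEq V] (G : SimpleGraph V) (A : Finset V) :
    Finset V :=
  A ∪ nbhd G A

/-- The induced subgraph `G[s]` is in class `W₂`: every two disjoint independent subsets of `s`
extend to two disjoint maximum independent subsets of `s`. -/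
def W2On {V : Type*} [Fintype V] (G : SimpleGraph V) (s : Finset V) : Prop :=
  ∀ A ⊆ s, ∀ B ⊆ s, IndepSet G A → IndepSet G B → Disjoint A B →
    ∃ S₁ ⊆ s, ∃ S₂ ⊆ s, IndepSet G S₁ ∧ IndepSet G S₂ ∧
      S₁.card = alphaOn G s ∧ S₂.card = alphaOn G s ∧ Disjoint S₁ S₂ ∧ A ⊆ S₁ ∧ B ⊆ S₂

/-- `G` belongs to class `W₂`. -/
def W2 {V : Type*} [Fintype V] (G : SimpleGraph V) : Prop :=
  W2On G Finset.univ

/-!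
A vertex `u` of an independent set `S` in a `W₂` graph has a private neighbour: extend `{u}` and
`S \ {u}` to disjoint maximum independent sets `S₁ ∋ u` and `S₂ ⊇ S \ {u}`; by maximality `u`
has a neighbour in `S₂`, and that neighbour sees no other vertex of `S`. For `v ∈ S`, the
private neighbours of the vertices of `S \ {v}` are distinct and lie in `N(S) \ N(v)`, whence
`|S| - 1 ≤ |N(S)| - deg v`.
-/

open Finset SimpleGraph

section

variable {V : Type*}

def IsPrivateNeighbor (G : SimpleGraph V) (S : Finset V) (u w : V) : Prop :=
  G.Adj u w ∧ ∀ s ∈ S, s ≠ u → ¬ G.Adj s w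

section IndepSet

variable {G : SimpleGraph V} {A B : Finset V}

lemma IndepSet.mono (hB : IndepSet G B) (hAB : A ⊆ B) : IndepSet G A :=
  fun x hx y hy => hB x (hAB hx) y (hAB hy)

lemma indepSet_singleton (u : V) : IndepSet G {u} := by
  intro x hx y hy
  rw [mem_singleton] at hx hy
  subst hx hy
  exact G.irrefl

lemma IndepSet.insert [DecidableEq V] {u : V} (hA : IndepSet G A)
    (hu : ∀ w ∈ A, ¬ G.Adj u w) : IndepSet G (insert u A) := by
  intro x hx y hy hxy
  rcases mem_insert.1 hx with hxu | hx <;> rcases mem_insert.1 hy with hyu | hy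
  · exact G.ne_of_adj hxy (hxu.trans hyu.symm)
  · exact hu y hy (hxu ▸ hxy)
  · exact hu x hx (hyu ▸ hxy.symm)
  · exact hA x hx y hy hxy

variable [Fintype V] {s : Finset V}

lemma IndepSet.card_le_alphaOn (hA : IndepSet G A) (hAs : A ⊆ s) : A.card ≤ alphaOn G s := by
  classical
  exact le_sup (f := card) (mem_filter.2 ⟨mem_powerset.2 hAs, hA⟩)

lemma IndepSet.exists_adj_of_card_eq_alphaOn (hA : IndepSet G A) (hAs : A ⊆ s)
    (hcard : A.card = alphaOn G s) {u : V} (hus : u ∈ s) (huA : u ∉ A) :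
    ∃ w ∈ A, G.Adj u w := by
  classical
  by_contra! hu
  have hle := (hA.insert hu).card_le_alphaOn (insert_subset hus hAs)
  rw [card_insert_of_notMem huA, hcard] at hle
  omega

end IndepSet

lemma W2On.exists_isPrivateNeighbor [Fintype V] {G : SimpleGraph V} {s S : Finset V}
    (h : W2On G s) (hSs : S ⊆ s) (hS : IndepSet G S) {u : V} (hu : u ∈ S) :
    ∃ w, IsPrivateNeighbor G S u w := by
  classical
  obtain ⟨S₁, -, S₂, hS₂s, -, hS₂, -, hcard₂, hdisj, huS₁, hS₂S⟩ :=
    h {u} (singleton_subset_iff.2 (hSs hu)) (S.erase u) ((erase_subset u S).trans hSs)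
      (indepSet_singleton u) (hS.mono (erase_subset u S)) (by simp)
  have huS₂ : u ∉ S₂ := disjoint_left.1 hdisj (singleton_subset_iff.1 huS₁)
  obtain ⟨w, hwS₂, huw⟩ := hS₂.exists_adj_of_card_eq_alphaOn hS₂s hcard₂ (hSs hu) huS₂
  exact ⟨w, huw, fun t ht htu => hS₂ t (hS₂S (mem_erase.2 ⟨htu, ht⟩)) w hwS₂⟩

section Counting

variable [Fintype V] {G : SimpleGraph V} [DecidableRel G.Adj] {S : Finset V} {v : V}

lemma neighborFinset_subset_nbhd (hv : v ∈ S) : G.neighborFinset v ⊆ nbhd G S := by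
  intro w hw
  simp only [nbhd, mem_filter, mem_univ, true_and]
  exact ⟨v, hv, (mem_neighborFinset ..).1 hw⟩

lemma card_erase_le_card_nbhd_sdiff_neighborFinset [DecidableEq V]
    (hpriv : ∀ u ∈ S, ∃ w, IsPrivateNeighbor G S u w) (hv : v ∈ S) :
    (S.erase v).card ≤ (nbhd G S \ G.neighborFinset v).card := by
  refine card_le_card_of_forall_subsingleton (IsPrivateNeighbor G S) ?_ ?_
  · intro u hu
    obtain ⟨huv, huS⟩ := mem_erase.1 hu
    obtain ⟨w, huw, hw⟩ := hpriv u huS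
    refine ⟨w, ?_, huw, hw⟩
    simp only [mem_sdiff, nbhd, mem_filter, mem_univ, true_and, mem_neighborFinset]
    exact ⟨⟨u, huS, huw⟩, hw v hv (Ne.symm huv)⟩
  · rintro w - u ⟨hu, huw, -⟩ u' ⟨-, -, hu'w⟩
    by_contra hne
    exact hu'w u (mem_of_mem_erase hu) hne huw

end Counting

end

theorem stmt12_general {V : Type*} [Fintype V] (G : SimpleGraph V) [DecidableRel G.Adj]
    (h : W2 G) :
    ∀ S : Finset V, IndepSet G S → ∀ v ∈ S,
      G.degree v + S.card ≤ (nbhd G S).card + 1 := by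
  classical
  intro S hS v hv
  have hcount := card_erase_le_card_nbhd_sdiff_neighborFinset
    (fun u hu => W2On.exists_isPrivateNeighbor h (subset_univ S) hS hu) hv
  have hsplit := card_sdiff_add_card_eq_card (neighborFinset_subset_nbhd (G := G) hv)
  have hcardS := card_erase_add_one hv
  rw [card_neighborFinset_eq_degree] at hsplit
  omega

/-- In a connected W₂ graph, deg(v) ≤ |N(S)| - |S| + 1 for every independent set S and
every v ∈ S. -/
theorem stmt12 {V : Type*} [Fintype V] (G : SimpleGraph V) [DecidableRel G.Adj]
    (hconn : G.Connected) (h : W2 G) :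
    ∀ S : Finset V, IndepSet G S → ∀ v ∈ S,
      G.degree v + S.card ≤ (nbhd G S).card + 1 :=
  stmt12_general G h
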